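/- arXiv:2512.18098 — 2 statements merged into one kernel-verified Lean document; each statement's English description precedes it below -/
import Mathlib

section
/- Let Q be a real N × N matrix whose rows sum to zero (∀ i, Σ_j Q i j = 0), and let s : Fin N → ℝ. Fix i, and define w(τ) = ∫_0^τ (exp(u·Q) ·ᵥ s) i du. Then, as τ → 0, the function τ ↦ w(τ) − ( s i · τ + (1/2)·(Σ_{j ≠ i} Q i j · (s j − s i))·τ² ) is O(τ³). -/
open Matrix NormedSpace Asymptotics

/-- Regime-mixing expansion of the expected integrated variance: if `Q` has zero row sums,
then `w(τ) = ∫_0^τ [e^{uQ} s]_i du` satisfies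
`w(τ) = s_i τ + (1/2) (∑_{j≠i} Q i j (s j − s i)) τ² + O(τ³)` as `τ → 0`. -/
theorem integrated_variance_expansion {N : ℕ} (Q : Matrix (Fin N) (Fin N) ℝ)
    (hQ : ∀ i, ∑ j, Q i j = 0) (s : Fin N → ℝ) (i : Fin N) :
    let w : ℝ → ℝ := fun τ => ∫ u in (0:ℝ)..τ, (exp (u • Q) *ᵥ s) i
    (fun τ : ℝ =>
        w τ - (s i * τ + (1 / 2) * (∑ j ∈ Finset.univ.erase i, Q i j * (s j - s i)) * τ ^ 2))
      =O[nhds 0] fun τ : ℝ => τ ^ 3 := by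
  intro w
  letI : SeminormedRing (Matrix (Fin N) (Fin N) ℝ) := Matrix.linftyOpSemiNormedRing
  letI : NormedRing (Matrix (Fin N) (Fin N) ℝ) := Matrix.linftyOpNormedRing
  letI : NormedAlgebra ℝ (Matrix (Fin N) (Fin N) ℝ) := Matrix.linftyOpNormedAlgebra
  haveI : CompleteSpace (Matrix (Fin N) (Fin N) ℝ) := FiniteDimensional.complete ℝ _
  letI : NormedAlgebra ℚ (Matrix (Fin N) (Fin N) ℝ) := .restrictScalars ℚ ℝ _
  -- the evaluation map as a continuous linear map
  let L₀ : Matrix (Fin N) (Fin N) ℝ →ₗ[ℝ] ℝ :=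
    { toFun := fun M => (M *ᵥ s) i
      map_add' := fun M M' => by simp [Matrix.add_mulVec]
      map_smul' := fun c M => by simp [Matrix.smul_mulVec] }
  let L : Matrix (Fin N) (Fin N) ℝ →L[ℝ] ℝ := LinearMap.toContinuousLinearMap L₀
  have hL : ∀ M, L M = (M *ᵥ s) i := fun M => rfl
  set g : ℝ → ℝ := fun u => L (exp (u • Q)) with hg_def
  set h : ℝ → ℝ := fun u => L (exp (u • Q) * Q) with hh_def
  set k : ℝ → ℝ := fun u => L (exp (u • Q) * Q * Q) with hk_def
  have cont_exp : Continuous fun u : ℝ => exp (u • Q) :=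
    exp_continuous.comp (continuous_id.smul continuous_const)
  have cont_g : Continuous g := L.continuous.comp cont_exp
  have cont_k : Continuous k :=
    L.continuous.comp ((cont_exp.mul continuous_const).mul continuous_const)
  have hg : ∀ u : ℝ, HasDerivAt g (h u) u := fun u =>
    L.hasFDerivAt.comp_hasDerivAt u (hasDerivAt_exp_smul_const Q u)
  have hh : ∀ u : ℝ, HasDerivAt h (k u) u := fun u =>
    L.hasFDerivAt.comp_hasDerivAt u ((hasDerivAt_exp_smul_const Q u).mul_const Q)
  -- values at 0
  have hg0 : g 0 = s i := by
    simp only [hg_def, hL, zero_smul, exp_zero, Matrix.one_mulVec]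
  have hh0 : h 0 = ∑ j ∈ Finset.univ.erase i, Q i j * (s j - s i) := by
    have h2 : ∑ j ∈ Finset.univ.erase i, Q i j + Q i i = 0 := by
      rw [Finset.sum_erase_add _ _ (Finset.mem_univ i)]; exact hQ i
    have h3 : ∑ j ∈ Finset.univ.erase i, Q i j * s j + Q i i * s i = ∑ j, Q i j * s j :=
      Finset.sum_erase_add _ _ (Finset.mem_univ i)
    have h5 : h 0 = ∑ j, Q i j * s j := by
      simp only [hh_def, hL, zero_smul, exp_zero, one_mul, Matrix.mulVec, dotProduct]
    have h7 : ∑ j ∈ Finset.univ.erase i, Q i j * (s j - s i)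
        = ∑ j, Q i j * (s j - s i) := by
      rw [← Finset.sum_erase_add _ _ (Finset.mem_univ i)]; simp
    have h8 : ∑ j, Q i j * (s j - s i) = ∑ j, Q i j * s j := by
      simp only [mul_sub, Finset.sum_sub_distrib, ← Finset.sum_mul, hQ i, zero_mul, sub_zero]
    rw [h5, h7, h8]
  -- bound on k on [-1,1]
  obtain ⟨C, hC⟩ : ∃ C, ∀ u ∈ Set.Icc (-1:ℝ) 1, ‖k u‖ ≤ C :=
    isCompact_Icc.exists_bound_of_continuousOn cont_k.continuousOn
  have hC0 : 0 ≤ C := le_trans (norm_nonneg (k 0)) (hC 0 (by norm_num))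
  -- first order bound on h
  have hstep1 : ∀ u ∈ Set.Icc (-1:ℝ) 1, ‖h u - h 0‖ ≤ C * ‖u - (0:ℝ)‖ := fun u hu =>
    (convex_Icc (-1:ℝ) 1).norm_image_sub_le_of_norm_hasDerivWithin_le
      (fun t ht => (hh t).hasDerivWithinAt) hC (by norm_num) hu
  set φ : ℝ → ℝ := fun u => g u - g 0 - u * h 0 with hφ_def
  have hφ : ∀ u ∈ Set.Icc (-1:ℝ) 1, ‖φ u‖ ≤ C * u ^ 2 := by
    intro u hu
    have hu1 : |u| ≤ 1 := abs_le.mpr hu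
    have hsub : Set.uIcc (0:ℝ) u ⊆ Set.Icc (-1:ℝ) 1 :=
      Set.uIcc_subset_Icc (by norm_num) hu
    have hderiv : ∀ t ∈ Set.uIcc (0:ℝ) u,
        HasDerivWithinAt φ (h t - h 0) (Set.uIcc (0:ℝ) u) t := by
      intro t ht
      have := ((hg t).sub_const (g 0)).sub ((hasDerivAt_id t).mul_const (h 0))
      simpa [one_mul] using (show HasDerivWithinAt φ _ _ t from this.hasDerivWithinAt)
    have hbound : ∀ t ∈ Set.uIcc (0:ℝ) u, ‖h t - h 0‖ ≤ C * |u| := by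
      intro t ht
      have htu : |t| ≤ |u| := by
        have h1 : Set.uIcc (0:ℝ) u ⊆ Set.Icc (-|u|) |u| :=
          Set.uIcc_subset_Icc
            (Set.mem_Icc.mpr ⟨neg_nonpos_of_nonneg (abs_nonneg u), abs_nonneg u⟩)
            (Set.mem_Icc.mpr ⟨neg_abs_le u, le_abs_self u⟩)
        exact abs_le.mpr (h1 ht)
      calc ‖h t - h 0‖ ≤ C * ‖t - (0:ℝ)‖ := hstep1 t (hsub ht)
        _ = C * |t| := by rw [sub_zero, Real.norm_eq_abs]
        _ ≤ C * |u| := by exact mul_le_mul_of_nonneg_left htu hC0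
    have key := (convex_uIcc (0:ℝ) u).norm_image_sub_le_of_norm_hasDerivWithin_le
      hderiv hbound (Set.left_mem_uIcc) (Set.right_mem_uIcc)
    have hφ0 : φ 0 = 0 := by simp [hφ_def]
    calc ‖φ u‖ = ‖φ u - φ 0‖ := by rw [hφ0, sub_zero]
      _ ≤ C * |u| * ‖u - (0:ℝ)‖ := key
      _ = C * u ^ 2 := by
          rw [sub_zero, Real.norm_eq_abs, mul_assoc, ← abs_mul, abs_mul_self]; ring
  -- integral representation
  have hw : ∀ τ : ℝ, w τ - (g 0 * τ + h 0 * (τ ^ 2 / 2)) = ∫ u in (0:ℝ)..τ, φ u := by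
    intro τ
    have hint1 : IntervalIntegrable g MeasureTheory.volume 0 τ :=
      cont_g.intervalIntegrable _ _
    have hint2 : IntervalIntegrable (fun u : ℝ => g 0 + u * h 0) MeasureTheory.volume 0 τ :=
      (continuous_const.add (continuous_id.mul continuous_const)).intervalIntegrable _ _
    have h1 : ∫ u in (0:ℝ)..τ, φ u
        = (∫ u in (0:ℝ)..τ, g u) - ∫ u in (0:ℝ)..τ, (g 0 + u * h 0) := by
      rw [← intervalIntegral.integral_sub hint1 hint2]
      congr 1
      ext u
      simp [hφ_def]; ring
    have h2 : ∫ u in (0:ℝ)..τ, (g 0 + u * h 0) = g 0 * τ + h 0 * (τ ^ 2 / 2) := by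
      have hlin : IntervalIntegrable (fun u : ℝ => u * h 0) MeasureTheory.volume 0 τ :=
        (continuous_id.mul continuous_const).intervalIntegrable _ _
      rw [intervalIntegral.integral_add (intervalIntegrable_const) hlin,
        intervalIntegral.integral_const, intervalIntegral.integral_mul_const,
        integral_id]
      simp only [smul_eq_mul]; ring
    have h3 : w τ = ∫ u in (0:ℝ)..τ, g u := rfl
    rw [h1, h2, h3]
  -- conclude
  rw [isBigO_iff]
  refine ⟨C, ?_⟩
  filter_upwards [Metric.closedBall_mem_nhds (0:ℝ) one_pos] with τ hτ
  rw [Metric.mem_closedBall, Real.dist_eq, sub_zero] at hτ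
  have key : ‖∫ u in (0:ℝ)..τ, φ u‖ ≤ C * τ ^ 2 * |τ - 0| := by
    apply intervalIntegral.norm_integral_le_of_norm_le_const
    intro x hx
    have hxτ : |x| ≤ |τ| := by
      rcases Set.mem_uIoc.mp hx with ⟨h1, h2⟩ | ⟨h1, h2⟩
      · exact abs_le.mpr ⟨by linarith [abs_nonneg τ], by linarith [le_abs_self τ]⟩
      · exact abs_le.mpr ⟨by linarith [neg_abs_le τ], by linarith [abs_nonneg τ]⟩
    have hx1 : x ∈ Set.Icc (-1:ℝ) 1 := abs_le.mp (hxτ.trans hτ)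
    calc ‖φ x‖ ≤ C * x ^ 2 := hφ x hx1
      _ ≤ C * τ ^ 2 := by
          have : x ^ 2 ≤ τ ^ 2 := by
            rw [← sq_abs x, ← sq_abs τ]
            exact pow_le_pow_left₀ (abs_nonneg x) hxτ 2
          exact mul_le_mul_of_nonneg_left this hC0
  have hrepr : w τ - (s i * τ
        + (1 / 2) * (∑ j ∈ Finset.univ.erase i, Q i j * (s j - s i)) * τ ^ 2)
      = ∫ u in (0:ℝ)..τ, φ u := by
    rw [← hw τ, hg0, hh0]; ring
  rw [hrepr]
  calc ‖∫ u in (0:ℝ)..τ, φ u‖ ≤ C * τ ^ 2 * |τ - 0| := key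
    _ = C * ‖τ ^ 3‖ := by
        rw [sub_zero, Real.norm_eq_abs, abs_pow, ← sq_abs τ]
        ring
end

section
/- Let L be a symmetric real n × n matrix (n ≥ 1) with L ·ᵥ 𝟙 = 0, where 𝟙 is the all-ones vector, and suppose there is λ > 0 such that ⟨x, L ·ᵥ x⟩ ≥ λ·‖x‖² for every vector x with Σ_i x_i = 0 (Euclidean inner product and norm). Let x : ℝ → (Fin n → ℝ) be differentiable with x'(t) = −L ·ᵥ x(t) for all t ≥ 0. Then: (i) the sum Σ_i x_i(t) is constant in t; and (ii) writing x̄ = (1/n)·Σ_i x_i(0), for all t ≥ 0, ‖x(t) − x̄·𝟙‖ ≤ exp(−λ·t)·‖x(0) − x̄·𝟙‖. -/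
open Matrix

/-- Laplacian consensus contraction: if `L` is symmetric with `L·𝟙 = 0` and is coercive
with constant `λ > 0` on the sum-zero subspace (Euclidean inner product/norm), then any
solution of `x' = −L x` conserves the total sum, and the disagreement
`‖x(t) − x̄·𝟙‖` contracts at rate `exp(−λt)`, where `x̄` is the average of `x(0)`. -/
theorem laplacian_disagreement_decay {n : ℕ} (hn : 1 ≤ n)
    (L : Matrix (Fin n) (Fin n) ℝ) (hLsym : Lᵀ = L)
    (hL1 : L *ᵥ (fun _ => (1 : ℝ)) = 0)
    (lam : ℝ) (hlam : 0 < lam)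
    (hcoerc : ∀ y : Fin n → ℝ, (∑ i, y i) = 0 →
      lam * (∑ i, (y i) ^ 2) ≤ ∑ i, y i * (L *ᵥ y) i)
    (x : ℝ → (Fin n → ℝ)) (hx : ∀ t : ℝ, 0 ≤ t → HasDerivAt x (-(L *ᵥ x t)) t) :
    (∀ t : ℝ, 0 ≤ t → ∑ i, x t i = ∑ i, x 0 i) ∧
    (let xbar : ℝ := (1 / (n : ℝ)) * ∑ i, x 0 i
     ∀ t : ℝ, 0 ≤ t →
       Real.sqrt (∑ i, (x t i - xbar) ^ 2) ≤
         Real.exp (-lam * t) * Real.sqrt (∑ i, (x 0 i - xbar) ^ 2)) := by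
  -- sum of (L *ᵥ v) is zero
  have hsumLv : ∀ v : Fin n → ℝ, (∑ i, (L *ᵥ v) i) = 0 := by
    intro v
    have h1 : (∑ i, (L *ᵥ v) i) = (fun _ => (1 : ℝ)) ⬝ᵥ (L *ᵥ v) := by
      simp [dotProduct]
    rw [h1, dotProduct_mulVec, ← mulVec_transpose, hLsym, hL1]
    simp [dotProduct]
  -- component derivatives
  have hxi : ∀ t : ℝ, 0 ≤ t → ∀ i, HasDerivAt (fun s => x s i) ((-(L *ᵥ x t)) i) t :=
    fun t ht i => hasDerivAt_pi.1 (hx t ht) i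
  -- sum derivative zero
  have hsder : ∀ t : ℝ, 0 ≤ t → HasDerivAt (fun s => ∑ i, x s i) 0 t := by
    intro t ht
    have := HasDerivAt.fun_sum (fun i (_ : i ∈ Finset.univ) => hxi t ht i)
    have h0 : (∑ i, (-(L *ᵥ x t)) i) = 0 := by
      simp only [Pi.neg_apply, Finset.sum_neg_distrib]
      rw [hsumLv]; ring
    rwa [h0] at this
  have hsum : ∀ t : ℝ, 0 ≤ t → ∑ i, x t i = ∑ i, x 0 i := by
    intro t ht
    have hcont : ContinuousOn (fun s => ∑ i, x s i) (Set.Icc 0 t) := by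
      intro s hs
      exact ((hsder s hs.1).continuousAt).continuousWithinAt
    have := constant_of_has_deriv_right_zero hcont
      (fun s hs => ((hsder s hs.1).hasDerivWithinAt)) t (Set.mem_Icc.2 ⟨ht, le_refl t⟩)
    exact this
  refine ⟨hsum, ?_⟩
  intro xbar t ht
  have hnpos : (0:ℝ) < n := by exact_mod_cast hn
  -- sum-zero property of y s = x s - xbar
  have hy0 : ∀ s : ℝ, 0 ≤ s → (∑ i, (x s i - xbar)) = 0 := by
    intro s hs
    rw [Finset.sum_sub_distrib, hsum s hs]
    simp only [Finset.sum_const, Finset.card_univ, Fintype.card_fin, nsmul_eq_mul]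
    simp only [xbar]; rw [← mul_assoc, mul_one_div_cancel hnpos.ne', one_mul, sub_self]
  -- define g
  set g : ℝ → ℝ := fun s => ∑ i, (x s i - xbar) ^ 2 with hg
  have hgnonneg : ∀ s, 0 ≤ g s := fun s => Finset.sum_nonneg fun i _ => sq_nonneg _
  have hgder : ∀ s : ℝ, 0 ≤ s →
      HasDerivAt g (∑ i, (2 * (x s i - xbar) * ((-(L *ᵥ x s)) i))) s := by
    intro s hs
    apply HasDerivAt.fun_sum
    intro i _
    have h1 : HasDerivAt (fun u => x u i - xbar) ((-(L *ᵥ x s)) i) s :=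
      (hxi s hs i).sub_const xbar
    have := h1.fun_pow 2
    simpa [mul_comm, mul_assoc, mul_left_comm] using this
  -- derivative bound: g' ≤ -2 lam g
  have hgbound : ∀ s : ℝ, 0 ≤ s →
      (∑ i, (2 * (x s i - xbar) * ((-(L *ᵥ x s)) i))) ≤ -2 * lam * g s := by
    intro s hs
    have hy := hy0 s hs
    have hc := hcoerc (fun i => x s i - xbar) hy
    have hLx : L *ᵥ (fun i => x s i - xbar) = L *ᵥ x s := by
      have : (fun i => x s i - xbar) = x s - xbar • (fun _ => (1:ℝ)) := by
        funext i; simp [smul_eq_mul]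
      rw [this, mulVec_sub, mulVec_smul, hL1]
      simp
    rw [hLx] at hc
    have : (∑ i, (2 * (x s i - xbar) * ((-(L *ᵥ x s)) i)))
        = -2 * ∑ i, (x s i - xbar) * (L *ᵥ x s) i := by
      rw [Finset.mul_sum]; congr 1; funext i; simp; ring
    rw [this]
    have : -2 * lam * g s = -2 * (lam * ∑ i, (x s i - xbar)^2) := by ring
    rw [this]
    nlinarith [hc]
  -- h = exp(2 lam s) * g s is antitone on [0, t]
  set h : ℝ → ℝ := fun s => Real.exp (2 * lam * s) * g s with hh
  have hhder : ∀ s : ℝ, 0 ≤ s → HasDerivAt h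
      (2 * lam * Real.exp (2 * lam * s) * g s
        + Real.exp (2 * lam * s) * (∑ i, (2 * (x s i - xbar) * ((-(L *ᵥ x s)) i)))) s := by
    intro s hs
    have he : HasDerivAt (fun u => Real.exp (2 * lam * u)) (2 * lam * Real.exp (2 * lam * s)) s := by
      have := ((hasDerivAt_id s).const_mul (2 * lam)).exp
      simpa [mul_comm] using this
    simpa using he.fun_mul (hgder s hs)
  have hanti : ∀ s ∈ Set.Icc (0:ℝ) t, h s ≤ h 0 := by
    intro s hs
    have hmono : AntitoneOn h (Set.Icc 0 t) := by
      apply antitoneOn_of_deriv_nonpos (convex_Icc 0 t)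
      · intro u hu; exact ((hhder u hu.1).continuousAt).continuousWithinAt
      · intro u hu
        rw [interior_Icc] at hu
        exact ((hhder u hu.1.le).differentiableAt).differentiableWithinAt
      · intro u hu
        rw [interior_Icc] at hu
        rw [(hhder u hu.1.le).deriv]
        have hb := hgbound u hu.1.le
        have hep : 0 < Real.exp (2 * lam * u) := Real.exp_pos _
        nlinarith [hgnonneg u]
    exact hmono (Set.mem_Icc.2 ⟨le_refl 0, ht⟩) hs hs.1
  have hgt : g t ≤ Real.exp (-2 * lam * t) * g 0 := by
    have := hanti t (Set.mem_Icc.2 ⟨ht, le_refl t⟩)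
    have h0 : h 0 = g 0 := by simp [hh]
    rw [h0] at this
    have hep : 0 < Real.exp (2 * lam * t) := Real.exp_pos _
    have : g t ≤ g 0 / Real.exp (2 * lam * t) := by
      rw [le_div_iff₀ hep]
      calc g t * Real.exp (2 * lam * t) = h t := by rw [hh]; ring
        _ ≤ g 0 := this
    calc g t ≤ g 0 / Real.exp (2 * lam * t) := this
      _ = Real.exp (-2 * lam * t) * g 0 := by
          rw [div_eq_mul_inv, ← Real.exp_neg]; ring_nf
  -- take square roots
  have := Real.sqrt_le_sqrt hgt
  calc Real.sqrt (∑ i, (x t i - xbar) ^ 2) = Real.sqrt (g t) := rfl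
    _ ≤ Real.sqrt (Real.exp (-2 * lam * t) * g 0) := Real.sqrt_le_sqrt hgt
    _ = Real.exp (-lam * t) * Real.sqrt (g 0) := by
        rw [Real.sqrt_mul (Real.exp_nonneg _)]
        congr 1
        have h2 : Real.exp (-2 * lam * t) = Real.exp (-lam * t) * Real.exp (-lam * t) := by
          rw [← Real.exp_add]; ring_nf
        rw [h2, Real.sqrt_mul_self (Real.exp_nonneg _)]
    _ = Real.exp (-lam * t) * Real.sqrt (∑ i, (x 0 i - xbar) ^ 2) := rfl
end
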